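/- For a non-negative integer m and non-negative integer i, the function z ↦ (z + m)^(i+1) * Γ^(i)(z), extended by the value (-1)^(m+i) * i! / m! at z = -m, is continuous at -m. -/

import Mathlib

/-!
Near `-m` one has `Γ z = g z / (z + m)` with `g z = Γ (z + m + 1) / (z (z + 1) ⋯ (z + m - 1))`
analytic at `-m` and `g (-m) = (-1)^m / m!`. Differentiating `i` times a function of the form
`g z / (z - c)` with `g` analytic at `c` gives `gᵢ z / (z - c)^(i+1)` with `gᵢ` analytic at `c` and
`gᵢ c = (-1)^i i! g c`, so `(z - c)^(i+1) f⁽ⁱ⁾ z → (-1)^i i! g c` as `z → c`.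
-/

open Filter Topology Polynomial Nat

section PolePart

variable {𝕜 : Type*} [NontriviallyNormedField 𝕜] [CompleteSpace 𝕜]

lemma eventually_deriv_div_sub_pow {g : 𝕜 → 𝕜} {c : 𝕜} (hg : AnalyticAt 𝕜 g c) (n : ℕ) :
    ∀ᶠ z in 𝓝[≠] c, deriv (fun w => g w / (w - c) ^ (n + 1)) z =
      ((z - c) * deriv g z - (n + 1 : ℕ) * g z) / (z - c) ^ (n + 2) := by
  filter_upwards [nhdsWithin_le_nhds hg.eventually_analyticAt, self_mem_nhdsWithin]
    with z hgz (hzc : z ≠ c)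
  have hsub : z - c ≠ 0 := sub_ne_zero.mpr hzc
  have hpow : HasDerivAt (fun w => (w - c) ^ (n + 1)) ((n + 1 : ℕ) * (z - c) ^ n) z := by
    simpa using ((hasDerivAt_id z).sub_const c).fun_pow (n + 1)
  rw [(hgz.differentiableAt.hasDerivAt.fun_div hpow (pow_ne_zero _ hsub)).deriv]
  field_simp
  ring

theorem exists_analyticAt_iteratedDeriv_eq_div_sub_pow {f g : 𝕜 → 𝕜} {c : 𝕜}
    (hg : AnalyticAt 𝕜 g c) (hf : f =ᶠ[𝓝[≠] c] fun z => g z / (z - c)) (i : ℕ) :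
    ∃ gᵢ : 𝕜 → 𝕜, AnalyticAt 𝕜 gᵢ c ∧ gᵢ c = (-1) ^ i * i ! * g c ∧
      iteratedDeriv i f =ᶠ[𝓝[≠] c] fun z => gᵢ z / (z - c) ^ (i + 1) := by
  induction i with
  | zero => exact ⟨g, hg, by simp, by simpa using hf⟩
  | succ i ih =>
    obtain ⟨gᵢ, hgᵢ, hgᵢc, hfᵢ⟩ := ih
    refine ⟨fun z => (z - c) * deriv gᵢ z - (i + 1 : ℕ) * gᵢ z,
      ((analyticAt_id.sub analyticAt_const).mul hgᵢ.deriv).sub (analyticAt_const.mul hgᵢ),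
      ?_, ?_⟩
    · simp only [sub_self, zero_mul, zero_sub, hgᵢc, factorial_succ]
      push_cast
      ring
    · rw [iteratedDeriv_succ]
      filter_upwards [hfᵢ.nhdsNE_deriv, eventually_deriv_div_sub_pow hgᵢ i] with z h₁ h₂
      rw [h₁, h₂]

theorem tendsto_sub_pow_mul_iteratedDeriv {f g : 𝕜 → 𝕜} {c : 𝕜}
    (hg : AnalyticAt 𝕜 g c) (hf : f =ᶠ[𝓝[≠] c] fun z => g z / (z - c)) (i : ℕ) :
    Tendsto (fun z => (z - c) ^ (i + 1) * iteratedDeriv i f z) (𝓝[≠] c)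
      (𝓝 ((-1) ^ i * i ! * g c)) := by
  obtain ⟨gᵢ, hgᵢ, hgᵢc, hfᵢ⟩ := exists_analyticAt_iteratedDeriv_eq_div_sub_pow hg hf i
  rw [← hgᵢc]
  refine hgᵢ.continuousAt.continuousWithinAt.tendsto.congr' ?_
  filter_upwards [hfᵢ, self_mem_nhdsWithin] with z hz (hzc : z ≠ c)
  rw [hz, mul_div_cancel₀ _ (pow_ne_zero _ (sub_ne_zero.mpr hzc))]

end PolePart

lemma ascPochhammer_eval_neg_natCast_self {R : Type*} [Ring R] (m : ℕ) :
    (ascPochhammer R m).eval (-(m : R)) = (-1) ^ m * m ! := by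
  rw [ascPochhammer_eval_neg_eq_descPochhammer, descPochhammer_eval_eq_descFactorial,
    Nat.descFactorial_self]

namespace Complex

lemma analyticAt_Gamma {s : ℂ} (hs : ∀ m : ℕ, s ≠ -m) : AnalyticAt ℂ Gamma s := by
  have h := (differentiable_one_div_Gamma.analyticAt s).inv (inv_ne_zero (Gamma_ne_zero hs))
  simpa [Pi.inv_def] using h

lemma eventually_nhdsNE_neg_natCast_ne (m : ℕ) : ∀ᶠ z : ℂ in 𝓝[≠] (-(m : ℂ)), ∀ k : ℕ, z ≠ -k := by
  filter_upwards [nhdsWithin_le_nhds (Metric.ball_mem_nhds _ one_pos), self_mem_nhdsWithin]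
    with z hz hzm k rfl
  have hkm : k ≠ m := by rintro rfl; exact hzm rfl
  rw [Metric.mem_ball, dist_neg_neg, ← ofReal_natCast, ← ofReal_natCast, isometry_ofReal.dist_eq,
    Nat.dist_cast_real] at hz
  exact (Nat.pairwise_one_le_dist hkm).not_gt hz

lemma Gamma_eventuallyEq_nhdsNE_neg_natCast (m : ℕ) :
    Gamma =ᶠ[𝓝[≠] (-(m : ℂ))]
      fun z => Gamma (z + (m + 1)) / (ascPochhammer ℂ m).eval z / (z - -m) := by
  filter_upwards [eventually_nhdsNE_neg_natCast_ne m, self_mem_nhdsWithin] with z hz (hzm : z ≠ -m)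
  have hpoch : (ascPochhammer ℂ m).eval z ≠ 0 := by
    rw [Ne, ascPochhammer_eval_eq_zero_iff]
    rintro ⟨k, -, hk⟩
    exact hz k (by rw [hk, neg_neg])
  have hshift : Gamma (z + (m + 1)) = Gamma z * ((ascPochhammer ℂ m).eval z * (z + m)) := by
    rw [← ascPochhammer_succ_eval, ← Gamma_add_nat_div_Gamma_eq z hz,
      mul_div_cancel₀ _ (Gamma_ne_zero hz), Nat.cast_succ]
  rw [hshift, sub_neg_eq_add, mul_div_assoc, mul_div_assoc, div_div,
    div_self (mul_ne_zero hpoch (by rwa [← sub_neg_eq_add, sub_ne_zero])), mul_one]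

lemma analyticAt_Gamma_add_div_ascPochhammer (m : ℕ) :
    AnalyticAt ℂ (fun z => Gamma (z + (m + 1)) / (ascPochhammer ℂ m).eval z) (-m) := by
  have hGamma : AnalyticAt ℂ (fun z => Gamma (z + (m + 1))) (-m) :=
    (analyticAt_Gamma (s := 1) fun k h =>
      Nat.cast_add_one_ne_zero k (by linear_combination h)).comp_of_eq
      (analyticAt_id.add analyticAt_const) (by ring)
  refine hGamma.div (AnalyticOnNhd.eval_polynomial _ _ (Set.mem_univ _)) ?_
  rw [ascPochhammer_eval_neg_natCast_self]
  exact mul_ne_zero (pow_ne_zero _ (by norm_num)) (by exact_mod_cast m.factorial_ne_zero)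

lemma Gamma_add_div_ascPochhammer_neg_natCast (m : ℕ) :
    Gamma (-m + (m + 1)) / (ascPochhammer ℂ m).eval (-(m : ℂ)) = (-1) ^ m / m ! := by
  rw [neg_add_cancel_left, Gamma_one, ascPochhammer_eval_neg_natCast_self, one_div, mul_inv,
    ← inv_pow, inv_neg_one, div_eq_mul_inv]

end Complex

theorem gamma_deriv_extended_continuous (m i : ℕ) :
    ContinuousAt
      (Function.update
        (fun z : ℂ => (z + m) ^ (i + 1) * iteratedDeriv i Complex.Gamma z)
        (-(m : ℂ)) ((-1 : ℂ) ^ (m + i) * (Nat.factorial i : ℂ) / (Nat.factorial m : ℂ)))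
      (-(m : ℂ)) := by
  rw [continuousAt_update_same]
  have h := tendsto_sub_pow_mul_iteratedDeriv (Complex.analyticAt_Gamma_add_div_ascPochhammer m)
    (Complex.Gamma_eventuallyEq_nhdsNE_neg_natCast m) i
  simp only [sub_neg_eq_add, Complex.Gamma_add_div_ascPochhammer_neg_natCast] at h
  convert h using 2
  ring
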